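/- In the strong coupling regime for the unidirectional three-node chain, i.e. for 0 < ν < 1 and β > 1/3 + ν, every equilibrium is fully synchronized: at any equilibrium one has f(x₃,ν) = 0 (so x₃ ∈ {−√ν, √ν, 1}) and moreover x₁ = x₂ = x₃; hence the chain has exactly three equilibria, (x*,x*,x*) for x* ∈ {−√ν, √ν, 1}. Conversely, for any β, every point (x,x,x) with f(x,ν) = 0 is an equilibrium. -/

import Mathlib

/-!
Once `x₃` is a zero of `f`, each of the first two equations says that `x ↦ f(x,ν) - βx` takes
the same value at `xᵢ` as at its downstream neighbour. From
`f(y) - f(c) = -(y - c)(y² + yc + c² - y - c - ν)` and `y² + yc + c² - y - c ≥ -1/3`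
(with equality at `y = c = 1/3`), this map is strictly decreasing as soon as `β > 1/3 + ν`,
so equal values force `x₂ = x₃` and then `x₁ = x₂`.
-/

/-- The single-node vector field `f(x,ν) = -(x-1)(x²-ν)`. -/
noncomputable def f (ν x : ℝ) : ℝ := -((x - 1) * (x ^ 2 - ν))

/-- `(x₁,x₂,x₃)` is an equilibrium of the unidirectionally coupled three-node chain
`ẋ₁ = f(x₁,ν) + β(x₂-x₁)`, `ẋ₂ = f(x₂,ν) + β(x₃-x₂)`, `ẋ₃ = f(x₃,ν)`. -/
def IsChainEquilibrium (ν β x₁ x₂ x₃ : ℝ) : Prop :=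
  f ν x₁ + β * (x₂ - x₁) = 0 ∧ f ν x₂ + β * (x₃ - x₂) = 0 ∧ f ν x₃ = 0

lemma f_eq_zero_iff {ν x : ℝ} (hν : 0 ≤ ν) :
    f ν x = 0 ↔ x = -Real.sqrt ν ∨ x = Real.sqrt ν ∨ x = 1 := by
  have hfactor : f ν x = -((x - 1) * ((x - Real.sqrt ν) * (x + Real.sqrt ν))) := by
    unfold f
    linear_combination (1 - x) * Real.sq_sqrt hν
  rw [hfactor, neg_eq_zero, mul_eq_zero, mul_eq_zero, sub_eq_zero, sub_eq_zero,
    add_eq_zero_iff_eq_neg]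
  tauto

lemma f_sub_f (ν y c : ℝ) :
    f ν y - f ν c = -((y - c) * (y ^ 2 + y * c + c ^ 2 - (y + c) - ν)) := by
  unfold f
  ring

lemma neg_one_third_le_sq_add_mul_add_sq_sub_add (y c : ℝ) :
    -(1 / 3) ≤ y ^ 2 + y * c + c ^ 2 - (y + c) := by
  nlinarith [sq_nonneg (y + c - 2 / 3), sq_nonneg (y - c)]

lemma strictAnti_f_sub_mul {ν β : ℝ} (hβ : 1 / 3 + ν < β) :
    StrictAnti fun x => f ν x - β * x := by
  intro y c hyc
  have hslope : 0 < c ^ 2 + c * y + y ^ 2 - (c + y) - ν + β := by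
    linarith [neg_one_third_le_sq_add_mul_add_sq_sub_add c y]
  have hdiff : (f ν c - β * c) - (f ν y - β * y) =
      -((c - y) * (c ^ 2 + c * y + y ^ 2 - (c + y) - ν + β)) := by
    linear_combination f_sub_f ν c y
  linarith [mul_pos (sub_pos.2 hyc) hslope]

lemma eq_of_coupled_eq_zero {ν β y c : ℝ} (hβ : 1 / 3 + ν < β)
    (h : f ν y + β * (c - y) = 0) (hc : f ν c = 0) : y = c :=
  (strictAnti_f_sub_mul hβ).injective (by linarith)

lemma IsChainEquilibrium.synchronized {ν β x₁ x₂ x₃ : ℝ} (hβ : 1 / 3 + ν < β)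
    (h : IsChainEquilibrium ν β x₁ x₂ x₃) : x₁ = x₃ ∧ x₂ = x₃ := by
  obtain ⟨h₁, h₂, h₃⟩ := h
  have e₂ : x₂ = x₃ := eq_of_coupled_eq_zero hβ h₂ h₃
  have e₁ : x₁ = x₂ := eq_of_coupled_eq_zero hβ h₁ (e₂ ▸ h₃)
  exact ⟨e₁.trans e₂, e₂⟩

lemma isChainEquilibrium_diag {ν β x : ℝ} (hx : f ν x = 0) : IsChainEquilibrium ν β x x x := by
  simp [IsChainEquilibrium, hx]

theorem chain_strong_coupling_synchronized_general {ν : ℝ} (hν0 : 0 < ν) :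
    (∀ β : ℝ, 1 / 3 + ν < β →
      (∀ x₁ x₂ x₃ : ℝ, IsChainEquilibrium ν β x₁ x₂ x₃ →
        (f ν x₃ = 0 ∧
          (x₃ = -Real.sqrt ν ∨ x₃ = Real.sqrt ν ∨ x₃ = 1) ∧
          x₁ = x₃ ∧ x₂ = x₃)) ∧
      {p : ℝ × ℝ × ℝ | IsChainEquilibrium ν β p.1 p.2.1 p.2.2} =
        {(-Real.sqrt ν, -Real.sqrt ν, -Real.sqrt ν),
          (Real.sqrt ν, Real.sqrt ν, Real.sqrt ν), (1, 1, 1)}) ∧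
    (∀ β x : ℝ, f ν x = 0 → IsChainEquilibrium ν β x x x) := by
  have hroots {x : ℝ} := f_eq_zero_iff (x := x) hν0.le
  refine ⟨fun β hβ => ⟨fun x₁ x₂ x₃ h => ?_, ?_⟩, fun β x => isChainEquilibrium_diag⟩
  · exact ⟨h.2.2, hroots.1 h.2.2, h.synchronized hβ⟩
  · ext ⟨a, b, c⟩
    simp only [Set.mem_ofPred_eq, Set.mem_insert_iff, Set.mem_singleton_iff, Prod.mk.injEq]
    constructor
    · intro h
      obtain ⟨rfl, rfl⟩ := h.synchronized hβ
      rcases hroots.1 h.2.2 with rfl | rfl | rfl <;> simp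
    · rintro (⟨rfl, rfl, rfl⟩ | ⟨rfl, rfl, rfl⟩ | ⟨rfl, rfl, rfl⟩) <;>
        exact isChainEquilibrium_diag (hroots.2 (by simp))

/-- In the strong coupling regime `β > 1/3 + ν` (with `0 < ν < 1`), every
equilibrium of the three-node chain is fully synchronized: `f(x₃,ν) = 0` (so
`x₃ ∈ {-√ν, √ν, 1}`) and `x₁ = x₂ = x₃`; hence there are exactly the three
equilibria `(x*,x*,x*)` with `x* ∈ {-√ν, √ν, 1}`. Conversely, for any `β`, every
point `(x,x,x)` with `f(x,ν) = 0` is an equilibrium. -/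
theorem chain_strong_coupling_synchronized {ν : ℝ} (hν0 : 0 < ν) (hν1 : ν < 1) :
    (∀ β : ℝ, 1 / 3 + ν < β →
      (∀ x₁ x₂ x₃ : ℝ, IsChainEquilibrium ν β x₁ x₂ x₃ →
        (f ν x₃ = 0 ∧
          (x₃ = -Real.sqrt ν ∨ x₃ = Real.sqrt ν ∨ x₃ = 1) ∧
          x₁ = x₃ ∧ x₂ = x₃)) ∧
      {p : ℝ × ℝ × ℝ | IsChainEquilibrium ν β p.1 p.2.1 p.2.2} =
        {(-Real.sqrt ν, -Real.sqrt ν, -Real.sqrt ν),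
          (Real.sqrt ν, Real.sqrt ν, Real.sqrt ν), (1, 1, 1)}) ∧
    (∀ β x : ℝ, f ν x = 0 → IsChainEquilibrium ν β x x x) :=
  chain_strong_coupling_synchronized_general hν0
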